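/- For every finite group G with |G| < 12, the poset Iso(G) is a lattice (every pair of classes has a greatest lower bound and a least upper bound), while the dihedral group D₁₂ of order 12 is a group whose poset Iso(D₁₂) is not a lattice. Hence 12 is the smallest order of a finite group G for which Iso(G) is not a lattice. -/

import Mathlib

/-- The setoid on subgroups of `G` given by group isomorphism. -/
def isoSetoid (G : Type*) [Group G] : Setoid (Subgroup G) where
  r H K := Nonempty (H ≃* K)
  iseqv := ⟨fun H => ⟨MulEquiv.refl H⟩, fun ⟨e⟩ => ⟨e.symm⟩, fun ⟨e⟩ ⟨f⟩ => ⟨e.trans f⟩⟩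

/-- `IsoClasses G` is the set of equivalence classes of subgroups of `G`
under group isomorphism. -/
def IsoClasses (G : Type*) [Group G] : Type _ := Quotient (isoSetoid G)

/-- The class of a subgroup `H` in `IsoClasses G`. -/
def IsoCls {G : Type*} [Group G] (H : Subgroup G) : IsoClasses G :=
  Quotient.mk (isoSetoid G) H

/-- `[H] ≤ [K]` iff some member of `[H]` is contained in some member of `[K]`. -/
instance instLEIsoClasses (G : Type*) [Group G] : LE (IsoClasses G) where
  le x y := ∃ H K : Subgroup G, IsoCls H = x ∧ IsoCls K = y ∧ H ≤ K


/-- The pair `x, y` has a greatest lower bound in `IsoClasses G`. -/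
def IsoClasses.HasGLB {G : Type*} [Group G] (x y : IsoClasses G) : Prop :=
  ∃ z : IsoClasses G, z ≤ x ∧ z ≤ y ∧ ∀ w : IsoClasses G, w ≤ x → w ≤ y → w ≤ z

/-- The pair `x, y` has a least upper bound in `IsoClasses G`. -/
def IsoClasses.HasLUB {G : Type*} [Group G] (x y : IsoClasses G) : Prop :=
  ∃ z : IsoClasses G, x ≤ z ∧ y ≤ z ∧ ∀ w : IsoClasses G, x ≤ w → y ≤ w → z ≤ w

/-- The poset `IsoClasses G` is a lattice: every pair of classes has a greatest lower
bound and a least upper bound. -/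
def IsoClasses.IsLattice (G : Type*) [Group G] : Prop :=
  ∀ x y : IsoClasses G, IsoClasses.HasGLB x y ∧ IsoClasses.HasLUB x y

/-!
Every subgroup of prime order `p` of a finite group lies in the class of `C_p`, and by Cauchy's
theorem that class lies below every class whose order is divisible by `p`. So the order of a
class determines most comparisons: if `|G| < 12`, two incomparable classes either have coprime
orders multiplying to `|G|` (meet `[1]`, join `[G]`), or `|G| = 8` and both have order `4`
(meet `[C₂]`, join `[G]`). In `D₁₂` the cyclic subgroup `C₆ = ⟨r⟩` and a copy of `S₃` are
non-isomorphic of order `6` and share the lower bounds `[C₂]` and `[C₃]`, so a meet would have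
order `6` and would equal both classes.
-/

theorem Nat.coprime_mul_eq_or_eq_four_of_mem_divisors_of_lt_twelve {n a b : ℕ} (hn : n < 12)
    (ha : a ∈ n.divisors) (hb : b ∈ n.divisors) (ha1 : a ≠ 1) (hb1 : b ≠ 1)
    (han : a ≠ n) (hbn : b ≠ n) (hab : a.Prime → ¬ a ∣ b) (hba : b.Prime → ¬ b ∣ a) :
    (a.Coprime b ∧ a * b = n) ∨ (a = 4 ∧ b = 4 ∧ n = 8) := by
  have key : ∀ n ∈ Finset.range 12, ∀ a ∈ n.divisors, ∀ b ∈ n.divisors, a ≠ 1 → b ≠ 1 →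
      a ≠ n → b ≠ n → (a.Prime → ¬ a ∣ b) → (b.Prime → ¬ b ∣ a) →
      (a.Coprime b ∧ a * b = n) ∨ (a = 4 ∧ b = 4 ∧ n = 8) := by
    decide
  exact key n (Finset.mem_range.2 hn) a ha b hb ha1 hb1 han hbn hab hba

theorem Subgroup.exists_le_card_eq_prime {G : Type*} [Group G] [Finite G] {p : ℕ}
    (hp : p.Prime) (H : Subgroup G) (h : p ∣ Nat.card H) :
    ∃ L ≤ H, Nat.card L = p := by
  have : Fact p.Prime := ⟨hp⟩
  obtain ⟨g, hg⟩ := exists_prime_orderOf_dvd_card' (G := H) p h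
  exact ⟨zpowers (g : G), (zpowers_le (H := H)).2 g.2, by
    rw [Nat.card_zpowers, Subgroup.orderOf_coe, hg]⟩

namespace IsoClasses

variable {G : Type*} [Group G]

@[elab_as_elim]
protected theorem ind {P : IsoClasses G → Prop} (h : ∀ H : Subgroup G, P (IsoCls H))
    (x : IsoClasses G) : P x :=
  Quotient.inductionOn x h

theorem isoCls_eq_isoCls_iff {H K : Subgroup G} : IsoCls H = IsoCls K ↔ Nonempty (H ≃* K) :=
  Quotient.eq

theorem isoCls_le_isoCls {H K : Subgroup G} (h : H ≤ K) : IsoCls H ≤ IsoCls K :=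
  ⟨H, K, rfl, rfl, h⟩

protected theorem le_refl (x : IsoClasses G) : x ≤ x :=
  x.ind fun _ => isoCls_le_isoCls le_rfl

theorem isoCls_bot_le (x : IsoClasses G) : IsoCls ⊥ ≤ x :=
  x.ind fun _ => isoCls_le_isoCls bot_le

theorem le_isoCls_top (x : IsoClasses G) : x ≤ IsoCls ⊤ :=
  x.ind fun _ => isoCls_le_isoCls le_top

theorem isoCls_ne_of_isMulCommutative {H K : Subgroup G} [IsMulCommutative H]
    (hK : ¬ IsMulCommutative K) : IsoCls H ≠ IsoCls K := by
  intro h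
  obtain ⟨e⟩ := isoCls_eq_isoCls_iff.1 h
  exact hK ⟨⟨fun a b => e.symm.injective <| by rw [map_mul, map_mul, mul_comm' (e.symm a)]⟩⟩

noncomputable def card : IsoClasses G → ℕ :=
  Quotient.lift (fun H : Subgroup G => Nat.card H) fun _ _ ⟨e⟩ => Nat.card_congr e.toEquiv

@[simp]
theorem card_isoCls (H : Subgroup G) : card (IsoCls H) = Nat.card H :=
  rfl

variable {x y : IsoClasses G}

theorem card_pos [Finite G] (x : IsoClasses G) : 0 < x.card :=
  x.ind fun _ => Nat.card_pos

theorem card_dvd_card (x : IsoClasses G) : x.card ∣ Nat.card G :=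
  x.ind fun H => H.card_subgroup_dvd_card

theorem card_dvd_of_le (h : x ≤ y) : x.card ∣ y.card := by
  obtain ⟨H, K, rfl, rfl, hHK⟩ := h
  exact Subgroup.card_dvd_of_le hHK

theorem eq_isoCls_bot_of_card_eq_one (h : x.card = 1) : x = IsoCls ⊥ := by
  induction x using IsoClasses.ind with
  | h H => rw [Subgroup.eq_bot_of_card_eq H h]

theorem eq_isoCls_top_of_card_eq [Finite G] (h : x.card = Nat.card G) : x = IsoCls ⊤ := by
  induction x using IsoClasses.ind with
  | h H => rw [Subgroup.eq_top_of_card_eq H h]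

theorem eq_of_le_of_card_eq [Finite G] (hxy : x ≤ y) (h : x.card = y.card) : x = y := by
  obtain ⟨H, K, rfl, rfl, hHK⟩ := hxy
  rw [Subgroup.eq_of_le_of_card_ge hHK h.ge]

theorem eq_of_card_eq_prime {p : ℕ} (hp : p.Prime) (hx : x.card = p) (hy : y.card = p) :
    x = y := by
  induction x using IsoClasses.ind with | h H =>
  induction y using IsoClasses.ind with | h K =>
  have : Fact p.Prime := ⟨hp⟩
  exact isoCls_eq_isoCls_iff.2 ⟨mulEquivOfPrimeCardEq hx hy⟩

theorem exists_le_card_eq_prime [Finite G] {p : ℕ} (hp : p.Prime) (h : p ∣ y.card) :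
    ∃ x ≤ y, x.card = p := by
  induction y using IsoClasses.ind with | h K =>
  obtain ⟨L, hLK, hL⟩ := K.exists_le_card_eq_prime hp h
  exact ⟨IsoCls L, isoCls_le_isoCls hLK, hL⟩

theorem le_of_card_prime_dvd [Finite G] (hp : x.card.Prime) (h : x.card ∣ y.card) : x ≤ y := by
  obtain ⟨z, hzy, hz⟩ := exists_le_card_eq_prime hp h
  rwa [eq_of_card_eq_prime hp rfl hz]

theorem le_of_card_eq_one (h : x.card = 1) : x ≤ y :=
  eq_isoCls_bot_of_card_eq_one h ▸ isoCls_bot_le y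

theorem le_of_card_eq_card [Finite G] (h : y.card = Nat.card G) : x ≤ y :=
  eq_isoCls_top_of_card_eq h ▸ le_isoCls_top x

theorem HasGLB.symm (h : HasGLB x y) : HasGLB y x :=
  let ⟨z, hzx, hzy, hz⟩ := h
  ⟨z, hzy, hzx, fun w hwy hwx => hz w hwx hwy⟩

theorem HasLUB.symm (h : HasLUB x y) : HasLUB y x :=
  let ⟨z, hxz, hyz, hz⟩ := h
  ⟨z, hyz, hxz, fun w hyw hxw => hz w hxw hyw⟩

theorem hasGLB_of_le (h : x ≤ y) : HasGLB x y :=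
  ⟨x, x.le_refl, h, fun _ hwx _ => hwx⟩

theorem hasLUB_of_le (h : x ≤ y) : HasLUB x y :=
  ⟨y, h, y.le_refl, fun _ _ hyw => hyw⟩

theorem hasGLB_of_coprime (hxy : x.card.Coprime y.card) : HasGLB x y := by
  refine ⟨IsoCls ⊥, isoCls_bot_le x, isoCls_bot_le y, fun w hwx hwy => ?_⟩
  exact le_of_card_eq_one
    (Nat.eq_one_of_dvd_coprimes hxy (card_dvd_of_le hwx) (card_dvd_of_le hwy))

theorem hasLUB_of_coprime [Finite G] (hxy : x.card.Coprime y.card)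
    (hmul : x.card * y.card = Nat.card G) : HasLUB x y := by
  refine ⟨IsoCls ⊤, le_isoCls_top x, le_isoCls_top y, fun w hxw hyw => ?_⟩
  exact le_of_card_eq_card <| Nat.dvd_antisymm (card_dvd_card w)
    (hmul ▸ hxy.mul_dvd_of_dvd_of_dvd (card_dvd_of_le hxw) (card_dvd_of_le hyw))

theorem hasGLB_of_card_eq_prime_sq [Finite G] {p : ℕ} (hp : p.Prime) (hne : x ≠ y)
    (hx : x.card = p ^ 2) (hy : y.card = p ^ 2) : HasGLB x y := by
  have hp_dvd : p ∣ p ^ 2 := dvd_pow_self p two_ne_zero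
  obtain ⟨z, hzx, hz⟩ := exists_le_card_eq_prime hp (hx ▸ hp_dvd)
  refine ⟨z, hzx, le_of_card_prime_dvd (hz ▸ hp) (hz ▸ hy ▸ hp_dvd), fun w hwx hwy => ?_⟩
  obtain ⟨i, hi, hw⟩ := (Nat.dvd_prime_pow hp).1 (hx ▸ card_dvd_of_le hwx)
  interval_cases i
  · exact le_of_card_eq_one (hw.trans (pow_zero p))
  · rw [eq_of_card_eq_prime hp (hw.trans (pow_one p)) hz]
    exact z.le_refl
  · exact absurd ((eq_of_le_of_card_eq hwx (hw.trans hx.symm)).symm.trans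
      (eq_of_le_of_card_eq hwy (hw.trans hy.symm))) hne

theorem hasLUB_of_card_eq_of_prime_index [Finite G] {p : ℕ} (hp : p.Prime) (hne : x ≠ y)
    (hxy : x.card = y.card) (hG : Nat.card G = x.card * p) : HasLUB x y := by
  refine ⟨IsoCls ⊤, le_isoCls_top x, le_isoCls_top y, fun w hxw hyw => ?_⟩
  obtain ⟨k, hk⟩ := card_dvd_of_le hxw
  have hkp : k ∣ p := by
    have := card_dvd_card w
    rw [hG, hk] at this
    exact Nat.dvd_of_mul_dvd_mul_left (card_pos x) this
  rcases (Nat.dvd_prime hp).1 hkp with rfl | rfl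
  · rw [mul_one] at hk
    exact absurd ((eq_of_le_of_card_eq hxw hk.symm).trans
      (eq_of_le_of_card_eq hyw (hxy ▸ hk).symm).symm) hne
  · exact le_of_card_eq_card (hk.trans hG.symm)

theorem not_hasGLB_of_card_eq_mul_primes [Finite G] {p q : ℕ} (hp : p.Prime) (hq : q.Prime)
    (hpq : p ≠ q) (hne : x ≠ y) (hx : x.card = p * q) (hy : y.card = p * q) :
    ¬ HasGLB x y := by
  rintro ⟨z, hzx, hzy, hz⟩
  have dvd_card_z : ∀ r : ℕ, r.Prime → r ∣ p * q → r ∣ z.card := fun r hr hrpq => by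
    obtain ⟨u, hux, hu⟩ := exists_le_card_eq_prime hr (hx ▸ hrpq)
    have huy : u ≤ y := le_of_card_prime_dvd (hu ▸ hr) (hu ▸ hy ▸ hrpq)
    exact hu ▸ card_dvd_of_le (hz u hux huy)
  have hzcard : z.card = p * q := Nat.dvd_antisymm (hx ▸ card_dvd_of_le hzx)
    (((Nat.coprime_primes hp hq).2 hpq).mul_dvd_of_dvd_of_dvd
      (dvd_card_z p hp (dvd_mul_right p q)) (dvd_card_z q hq (dvd_mul_left q p)))
  exact hne ((eq_of_le_of_card_eq hzx (hzcard.trans hx.symm)).symm.trans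
    (eq_of_le_of_card_eq hzy (hzcard.trans hy.symm)))

theorem isLattice_of_card_lt_twelve [Finite G] (hG : Nat.card G < 12) : IsLattice G := by
  intro x y
  by_cases hxy : x ≤ y
  · exact ⟨hasGLB_of_le hxy, hasLUB_of_le hxy⟩
  by_cases hyx : y ≤ x
  · exact ⟨(hasGLB_of_le hyx).symm, (hasLUB_of_le hyx).symm⟩
  have hG0 : Nat.card G ≠ 0 := Nat.card_pos.ne'
  rcases Nat.coprime_mul_eq_or_eq_four_of_mem_divisors_of_lt_twelve hG
      (Nat.mem_divisors.2 ⟨card_dvd_card x, hG0⟩) (Nat.mem_divisors.2 ⟨card_dvd_card y, hG0⟩)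
      (mt le_of_card_eq_one hxy) (mt le_of_card_eq_one hyx)
      (mt le_of_card_eq_card hyx) (mt le_of_card_eq_card hxy)
      (fun hp => mt (le_of_card_prime_dvd hp) hxy) (fun hp => mt (le_of_card_prime_dvd hp) hyx)
    with ⟨hcop, hmul⟩ | ⟨hx, hy, h8⟩
  · exact ⟨hasGLB_of_coprime hcop, hasLUB_of_coprime hcop hmul⟩
  · have hne : x ≠ y := fun h => hxy (h ▸ x.le_refl)
    exact ⟨hasGLB_of_card_eq_prime_sq Nat.prime_two hne hx hy,
      hasLUB_of_card_eq_of_prime_index Nat.prime_two hne (hx.trans hy.symm) (by rw [h8, hx])⟩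

end IsoClasses

namespace DihedralGroup

/-- A copy of `S₃` in `D₁₂`. -/
def evenSubgroup : Subgroup (DihedralGroup 6) where
  carrier := ↑({r 0, r 2, r 4, sr 0, sr 2, sr 4} : Finset (DihedralGroup 6))
  one_mem' := by decide
  mul_mem' := by decide
  inv_mem' := by decide

theorem card_evenSubgroup : Nat.card evenSubgroup = 6 :=
  Nat.card_eq_finsetCard {r 0, r 2, r 4, sr 0, sr 2, sr 4}

theorem not_isMulCommutative_evenSubgroup : ¬ IsMulCommutative evenSubgroup := fun _ =>
  absurd (congrArg Subtype.val (mul_comm' (⟨sr 0, by simp [evenSubgroup]⟩ : evenSubgroup)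
    ⟨r 2, by simp [evenSubgroup]⟩)) (by decide)

open IsoClasses in
theorem not_isLattice_six : ¬ IsLattice (DihedralGroup 6) := fun hlat =>
  not_hasGLB_of_card_eq_mul_primes Nat.prime_two Nat.prime_three (by norm_num)
    (isoCls_ne_of_isMulCommutative not_isMulCommutative_evenSubgroup)
    (by rw [card_isoCls, Nat.card_zpowers, orderOf_r_one])
    (by rw [card_isoCls, card_evenSubgroup]) (hlat (IsoCls (Subgroup.zpowers (r 1))) _).1

end DihedralGroup

/-- For every finite group `G` with `|G| < 12` the poset `IsoClasses G`
is a lattice, while for the dihedral group `D₁₂` of order `12` the poset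
`IsoClasses D₁₂` is not a lattice; hence `12` is the smallest order of a finite group
whose poset of isomorphism classes of subgroups is not a lattice. -/
theorem isoClasses_lattice_lt_twelve_and_not_dihedral_twelve :
    (∀ (G : Type) [Group G] [Finite G], Nat.card G < 12 → IsoClasses.IsLattice G) ∧
      ¬ IsoClasses.IsLattice (DihedralGroup 6) :=
  ⟨fun _ _ _ => IsoClasses.isLattice_of_card_lt_twelve, DihedralGroup.not_isLattice_six⟩
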